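/- arXiv:1704.07228 — 2 statements merged into one kernel-verified Lean document; each statement's English description precedes it below -/
import Mathlib

section
/- For any real numbers θ₁, …, θ_ρ with |θᵢ| ≤ α for all i, let p be the probability vector with pᵢ = e^{θᵢ}/(e^{θ₁}+⋯+e^{θ_ρ}). Then the matrix e^{2α}(diag(p) − p pᵀ) − ((1/ρ)·I − (1/ρ²)·𝟙𝟙ᵀ) is positive semidefinite. -/
open Real Matrix

/-
The quadratic form of diag(w) - w wᵀ, for a probability vector w, is the variance of x under w,
i.e. ∑ wᵢ (xᵢ - ⟨w, x⟩)². The variance is the least value of c ↦ ∑ wᵢ (xᵢ - c)², so for the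
uniform vector q = 𝟙/ρ we get Var_q(x) ≤ ∑ qᵢ (xᵢ - ⟨p, x⟩)² ≤ e^{2α} Var_p(x), the last step
because the softmax weights satisfy pᵢ ≥ e^{-2α}/ρ when |θᵢ| ≤ α.
-/

section Covariance

variable {n : Type*} [Fintype n]

theorem sum_mul_sq_sub_eq_sum_mul_sq_sub_dotProduct_add {w : n → ℝ} (hw : ∑ i, w i = 1)
    (x : n → ℝ) (c : ℝ) :
    ∑ i, w i * (x i - c) ^ 2 = ∑ i, w i * (x i - w ⬝ᵥ x) ^ 2 + (w ⬝ᵥ x - c) ^ 2 := by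
  set μ := w ⬝ᵥ x
  have hcentered : ∑ i, w i * (x i - μ) = 0 := by
    simp only [mul_sub, Finset.sum_sub_distrib, ← Finset.sum_mul, hw, one_mul]
    exact sub_eq_zero.2 rfl
  calc ∑ i, w i * (x i - c) ^ 2
      = ∑ i, (w i * (x i - μ) ^ 2 + 2 * (μ - c) * (w i * (x i - μ)) + (μ - c) ^ 2 * w i) :=
        Finset.sum_congr rfl fun i _ => by ring
    _ = ∑ i, w i * (x i - μ) ^ 2 + (μ - c) ^ 2 := by
        rw [Finset.sum_add_distrib, Finset.sum_add_distrib, ← Finset.mul_sum, ← Finset.mul_sum,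
          hcentered, hw]
        ring

theorem sum_mul_sq_sub_dotProduct_le {w : n → ℝ} (hw : ∑ i, w i = 1) (x : n → ℝ) (c : ℝ) :
    ∑ i, w i * (x i - w ⬝ᵥ x) ^ 2 ≤ ∑ i, w i * (x i - c) ^ 2 := by
  rw [sum_mul_sq_sub_eq_sum_mul_sq_sub_dotProduct_add hw x c]
  exact le_add_of_nonneg_right (sq_nonneg _)

variable [DecidableEq n]

/-- The covariance matrix of the one-hot vector of a categorical distribution with
probabilities `w`. -/
def categoricalCovariance (w : n → ℝ) : Matrix n n ℝ :=
  diagonal w - vecMulVec w w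

theorem isHermitian_categoricalCovariance (w : n → ℝ) :
    (categoricalCovariance w).IsHermitian :=
  (isHermitian_diagonal w).sub (posSemidef_vecMulVec_self_star w).isHermitian

theorem dotProduct_categoricalCovariance_mulVec {w : n → ℝ} (hw : ∑ i, w i = 1) (x : n → ℝ) :
    x ⬝ᵥ categoricalCovariance w *ᵥ x = ∑ i, w i * (x i - w ⬝ᵥ x) ^ 2 := by
  have h := sum_mul_sq_sub_eq_sum_mul_sq_sub_dotProduct_add hw x 0
  simp only [sub_zero] at h
  rw [categoricalCovariance, sub_mulVec, dotProduct_sub, vecMulVec_mulVec]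
  have hdiag : x ⬝ᵥ diagonal w *ᵥ x = ∑ i, w i * x i ^ 2 :=
    Finset.sum_congr rfl fun i _ => by rw [mulVec_diagonal]; ring
  rw [dotProduct_smul, op_smul_eq_mul, dotProduct_comm x w, hdiag, h]
  ring

theorem posSemidef_smul_categoricalCovariance_sub {p q : n → ℝ} (hp : ∑ i, p i = 1)
    (hq : ∑ i, q i = 1) {c : ℝ} (hqp : ∀ i, q i ≤ c * p i) :
    (c • categoricalCovariance p - categoricalCovariance q).PosSemidef := by
  refine posSemidef_iff_dotProduct_mulVec.2 ⟨?_, fun x => ?_⟩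
  · exact ((isHermitian_categoricalCovariance p).smul (IsSelfAdjoint.all c)).sub
      (isHermitian_categoricalCovariance q)
  rw [star_trivial, sub_mulVec, dotProduct_sub, smul_mulVec, dotProduct_smul, smul_eq_mul,
    sub_nonneg, dotProduct_categoricalCovariance_mulVec hp,
    dotProduct_categoricalCovariance_mulVec hq, Finset.mul_sum]
  calc ∑ i, q i * (x i - q ⬝ᵥ x) ^ 2
      ≤ ∑ i, q i * (x i - p ⬝ᵥ x) ^ 2 := sum_mul_sq_sub_dotProduct_le hq x _
    _ ≤ ∑ i, c * (p i * (x i - p ⬝ᵥ x) ^ 2) := Finset.sum_le_sum fun i _ => by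
        rw [← mul_assoc]; exact mul_le_mul_of_nonneg_right (hqp i) (sq_nonneg _)

end Covariance

theorem exp_neg_two_mul_div_card_le_exp_div_sum_exp {n : Type*} [Fintype n] {α : ℝ}
    {θ : n → ℝ} (hθ : ∀ i, |θ i| ≤ α) (i : n) :
    exp (-(2 * α)) / Fintype.card n ≤ exp (θ i) / ∑ j, exp (θ j) := by
  have hcard : (0 : ℝ) < Fintype.card n := Nat.cast_pos.2 (Fintype.card_pos_iff.2 ⟨i⟩)
  have hsum_le : ∑ j, exp (θ j) ≤ Fintype.card n * exp α := by
    simpa using Finset.sum_le_sum fun j (_ : j ∈ Finset.univ) =>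
      exp_le_exp.2 (le_of_abs_le (hθ j))
  rw [div_le_div_iff₀ hcard (Finset.sum_pos (fun j _ => exp_pos _) ⟨i, Finset.mem_univ _⟩)]
  calc exp (-(2 * α)) * ∑ j, exp (θ j)
      ≤ exp (-(2 * α)) * (Fintype.card n * exp α) := by gcongr
    _ = exp (-α) * Fintype.card n := by rw [mul_left_comm, ← exp_add]; ring_nf
    _ ≤ exp (θ i) * Fintype.card n := by gcongr; exact neg_le_of_abs_le (hθ i)

theorem stmt_0 (ρ : ℕ) (hρ : 0 < ρ) (α : ℝ) (θ : Fin ρ → ℝ)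
    (hθ : ∀ i, |θ i| ≤ α)
    (p : Fin ρ → ℝ)
    (hp : ∀ i, p i = Real.exp (θ i) / ∑ j, Real.exp (θ j)) :
    (Real.exp (2 * α) • (Matrix.diagonal p - Matrix.of (fun i j => p i * p j))
      - ((1 / (ρ : ℝ)) • (1 : Matrix (Fin ρ) (Fin ρ) ℝ)
        - (1 / (ρ : ℝ) ^ 2) • Matrix.of (fun _ _ => (1 : ℝ)))).PosSemidef := by
  have hρ' : (ρ : ℝ) ≠ 0 := Nat.cast_ne_zero.2 hρ.ne'
  have hp_sum : ∑ i, p i = 1 := by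
    simp only [hp, ← Finset.sum_div]
    exact div_self (Finset.sum_pos (fun j _ => exp_pos _) ⟨⟨0, hρ⟩, Finset.mem_univ _⟩).ne'
  have huniform_sum : ∑ _ : Fin ρ, 1 / (ρ : ℝ) = 1 := by simp [hρ']
  have huniform : (1 / (ρ : ℝ)) • (1 : Matrix (Fin ρ) (Fin ρ) ℝ)
      - (1 / (ρ : ℝ) ^ 2) • Matrix.of (fun _ _ => (1 : ℝ))
      = categoricalCovariance fun _ => 1 / (ρ : ℝ) := by
    ext i j
    by_cases hij : i = j <;> simp [categoricalCovariance, hij, vecMulVec_apply, sq]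
  rw [huniform]
  refine posSemidef_smul_categoricalCovariance_sub hp_sum huniform_sum fun i => ?_
  have hsoftmax := exp_neg_two_mul_div_card_le_exp_div_sum_exp hθ i
  rw [Fintype.card_fin, ← hp i] at hsoftmax
  calc 1 / (ρ : ℝ) = exp (2 * α) * (exp (-(2 * α)) / ρ) := by
        rw [mul_div_assoc', ← exp_add, add_neg_cancel, exp_zero]
    _ ≤ exp (2 * α) * p i := by gcongr
end

section
/- Let A, B ∈ ℝ^{d₁×d₂} be matrices such that the row space of A is orthogonal to the row space of B and the column space of A is orthogonal to the column space of B. Then ‖A + B‖_* = ‖A‖_* + ‖B‖_*, where ‖·‖_* denotes the nuclear norm (sum of singular values). -/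
/-!
Write `|M| = √(Mᴴ M)`, so that `‖M‖_* = tr |M|`. Orthogonality of the column spaces gives
`(A + B)ᴴ (A + B) = Aᴴ A + Bᴴ B`, and orthogonality of the row spaces gives `(Aᴴ A)(Bᴴ B) = 0`.
For positive semidefinite `M`, `N` with `M N = 0` the square roots also annihilate each other
(e.g. `(M √N)(M √N)ᴴ = M N M = 0`), so `√M + √N` is the positive semidefinite square root of
`M + N`; hence `|A + B| = |A| + |B|` and taking traces
gives the claim.
-/

open Matrix

/-- The nuclear norm of a real matrix: the sum of its singular values,
realized as the square roots of the eigenvalues of `Aᴴ * A`. -/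
noncomputable def nuclearNorm {d₁ d₂ : ℕ} (A : Matrix (Fin d₁) (Fin d₂) ℝ) : ℝ :=
  ∑ i, Real.sqrt ((Matrix.posSemidef_conjTranspose_mul_self A).1.eigenvalues i)

lemma IsSelfAdjoint.mul_eq_zero_swap {R : Type*} [NonUnitalNonAssocRing R] [StarRing R] {a b : R}
    (ha : IsSelfAdjoint a) (hb : IsSelfAdjoint b) (h : a * b = 0) : b * a = 0 :=
  (ha.commute_of_mul_eq_zero hb h).eq ▸ h

open scoped MatrixOrder ComplexOrder

namespace Matrix

variable {m n 𝕜 : Type*} [Fintype n] [DecidableEq n] [RCLike 𝕜]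

lemma IsHermitian.trace_cfc {A : Matrix n n 𝕜} (hA : A.IsHermitian) (f : ℝ → ℝ) :
    (cfc f A).trace = ∑ i, (f (hA.eigenvalues i) : 𝕜) := by
  rw [hA.cfc_eq, IsHermitian.cfc, Unitary.conjStarAlgAut_apply, trace_mul_cycle,
    Unitary.coe_star_mul_self, one_mul, trace_diagonal]
  rfl

lemma PosSemidef.trace_sqrt {A : Matrix n n 𝕜} (hA : A.PosSemidef) :
    (CFC.sqrt A).trace = ∑ i, (√(hA.1.eigenvalues i) : 𝕜) := by
  rw [CFC.sqrt_eq_cfc, cfc_nnreal_eq_real _ A hA.nonneg, hA.1.trace_cfc]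
  simp only [Real.sqrt]

lemma isHermitian_sqrt (N : Matrix n n 𝕜) : (CFC.sqrt N).IsHermitian :=
  (CFC.sqrt_nonneg N).posSemidef.1

lemma mul_sqrt_eq_zero_of_mul_eq_zero [Fintype m] {X : Matrix m n 𝕜} {N : Matrix n n 𝕜}
    (hN : N.PosSemidef) (h : X * N = 0) : X * CFC.sqrt N = 0 := by
  rw [← self_mul_conjTranspose_eq_zero, conjTranspose_mul, (isHermitian_sqrt N).eq,
    Matrix.mul_assoc, ← Matrix.mul_assoc (CFC.sqrt N), CFC.sqrt_mul_sqrt_self N hN.nonneg, ← Matrix.mul_assoc, h,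
    Matrix.zero_mul]

lemma PosSemidef.sqrt_mul_sqrt_eq_zero {M N : Matrix n n 𝕜} (hM : M.PosSemidef)
    (hN : N.PosSemidef) (h : M * N = 0) : CFC.sqrt M * CFC.sqrt N = 0 := by
  have hMsN : M * CFC.sqrt N = 0 := mul_sqrt_eq_zero_of_mul_eq_zero hN h
  have hsNM : CFC.sqrt N * M = 0 := IsSelfAdjoint.mul_eq_zero_swap hM.1 (isHermitian_sqrt N) hMsN
  have hsNsM : CFC.sqrt N * CFC.sqrt M = 0 := mul_sqrt_eq_zero_of_mul_eq_zero hM hsNM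
  exact IsSelfAdjoint.mul_eq_zero_swap (isHermitian_sqrt N) (isHermitian_sqrt M) hsNsM

lemma PosSemidef.sqrt_add_of_mul_eq_zero {M N : Matrix n n 𝕜} (hM : M.PosSemidef)
    (hN : N.PosSemidef) (h : M * N = 0) :
    CFC.sqrt (M + N) = CFC.sqrt M + CFC.sqrt N := by
  refine CFC.sqrt_unique ?_ (add_nonneg (CFC.sqrt_nonneg M) (CFC.sqrt_nonneg N))
  rw [Matrix.add_mul, Matrix.mul_add, Matrix.mul_add, CFC.sqrt_mul_sqrt_self M hM.nonneg,
    CFC.sqrt_mul_sqrt_self N hN.nonneg, hM.sqrt_mul_sqrt_eq_zero hN h,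
    hN.sqrt_mul_sqrt_eq_zero hM (IsSelfAdjoint.mul_eq_zero_swap hM.1 hN.1 h), add_zero, zero_add]

end Matrix

lemma nuclearNorm_eq_trace_sqrt {d₁ d₂ : ℕ} (A : Matrix (Fin d₁) (Fin d₂) ℝ) :
    nuclearNorm A = (CFC.sqrt (Aᵀ * A)).trace := by
  rw [nuclearNorm, ← conjTranspose_eq_transpose_of_trivial,
    (posSemidef_conjTranspose_mul_self A).trace_sqrt, RCLike.ofReal_real_eq_id]
  rfl

theorem stmt_13 {d₁ d₂ : ℕ} (A B : Matrix (Fin d₁) (Fin d₂) ℝ)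
    (hrow : A * Bᵀ = 0) (hcol : Aᵀ * B = 0) :
    nuclearNorm (A + B) = nuclearNorm A + nuclearNorm B := by
  have hcol' : Bᵀ * A = 0 := by simpa using congrArg transpose hcol
  have hgram : (A + B)ᵀ * (A + B) = Aᵀ * A + Bᵀ * B := by
    rw [transpose_add, Matrix.add_mul, Matrix.mul_add, Matrix.mul_add, hcol, hcol']
    abel
  have hprod : Aᵀ * A * (Bᵀ * B) = 0 := by
    rw [Matrix.mul_assoc, ← Matrix.mul_assoc A, hrow, Matrix.zero_mul, Matrix.mul_zero]
  have hA : (Aᵀ * A).PosSemidef := posSemidef_conjTranspose_mul_self A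
  have hB : (Bᵀ * B).PosSemidef := posSemidef_conjTranspose_mul_self B
  rw [nuclearNorm_eq_trace_sqrt, nuclearNorm_eq_trace_sqrt, nuclearNorm_eq_trace_sqrt, hgram,
    hA.sqrt_add_of_mul_eq_zero hB hprod, trace_add]
end
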